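/- arXiv:2301.07100 — 2 statements merged into one kernel-verified Lean document; each statement's English description precedes it below -/
import Mathlib

section
/- For all real parameters μ, ν, γ with 0 < μ ≤ 1, γ > 0, ν ≥ μγ, every real x ≥ 0, and every real s, the moment generating function of the fractional generalized probability distribution satisfies ∑_{n=0}^∞ e^{−sn} · Γ(ν) · (x^n / n!) · (d^n/dz^n E_{μ,ν}^γ)(−x) = Γ(ν) · E_{μ,ν}^γ(x(e^{−s} − 1)). -/
/-- The three-parameter Mittag-Leffler (Prabhakar) function
`E_{μ,ν}^γ(z) = ∑_{m=0}^∞ ((γ)_m / (m! Γ(μ m + ν))) z^m`,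
where `(γ)_m = Γ(γ+m)/Γ(γ)`. -/
noncomputable def prabhakar (μ ν γ : ℝ) (z : ℂ) : ℂ :=
  ∑' m : ℕ,
    (((Real.Gamma (γ + m) / Real.Gamma γ) / (m.factorial * Real.Gamma (μ * m + ν)) : ℝ) : ℂ)
      * z ^ m

/-!
`E_{μ,ν}^γ` is entire: by the ratio test, since the ratio of consecutive coefficients is
`(γ + m)/(m + 1) · Γ(μm + ν)/Γ(μm + ν + μ)`, and `Γ(t)/Γ(t + μ) ≤ (t - 1)^(-μ) → 0` by
log-convexity of `Γ`. The left-hand side is then the Taylor series of `E_{μ,ν}^γ` at `-x`,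
evaluated at `-x + x e^{-s}`.
-/

open Filter Topology Set
open scoped Nat

namespace Real

theorem Gamma_mul_rpow_le_Gamma_add {t a : ℝ} (ht : 1 < t) (ha : 0 < a) :
    Gamma t * (t - 1) ^ a ≤ Gamma (t + a) := by
  have ht1 : 0 < t - 1 := sub_pos.2 ht
  have hΓ : 0 < Gamma (t - 1) := Gamma_pos_of_pos ht1
  have hrec : Gamma t = (t - 1) * Gamma (t - 1) := by
    simpa using Gamma_add_one ht1.ne'
  -- the slope of `log ∘ Gamma` on `[t - 1, t]`, which is `log (t - 1)`, is at most its slope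
  -- on `[t, t + a]`
  have hslope := convexOn_log_Gamma.slope_mono_adjacent (mem_Ioi.2 ht1)
    (mem_Ioi.2 (by linarith : 0 < t + a)) (sub_one_lt t) (lt_add_of_pos_right t ha)
  simp only [Function.comp, hrec, log_mul ht1.ne' hΓ.ne', sub_sub_cancel, add_sub_cancel_left,
    div_one, add_sub_cancel_right] at hslope
  rw [le_div_iff₀ ha] at hslope
  rw [← log_le_log_iff (by positivity) (Gamma_pos_of_pos (by linarith)), hrec,
    log_mul (by positivity) (by positivity), log_mul ht1.ne' hΓ.ne', log_rpow ht1]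
  linarith

theorem tendsto_Gamma_div_Gamma_add_atTop {a : ℝ} (ha : 0 < a) :
    Tendsto (fun t => Gamma t / Gamma (t + a)) atTop (𝓝 0) := by
  have hpow : Tendsto (fun t : ℝ => (t - 1) ^ (-a)) atTop (𝓝 0) :=
    (tendsto_rpow_neg_atTop ha).comp (tendsto_atTop_add_const_right _ (-1) tendsto_id)
  refine tendsto_of_tendsto_of_tendsto_of_le_of_le' tendsto_const_nhds hpow ?_ ?_
  · filter_upwards [eventually_gt_atTop 0] with t ht
    exact div_nonneg (Gamma_pos_of_pos ht).le (Gamma_pos_of_pos (by linarith)).le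
  · filter_upwards [eventually_gt_atTop 1] with t ht
    rw [div_le_iff₀ (Gamma_pos_of_pos (by linarith)), rpow_neg (by linarith),
      ← div_eq_inv_mul, le_div_iff₀ (by bound)]
    exact Gamma_mul_rpow_le_Gamma_add ht ha

end Real

theorem tendsto_mul_natCast_add_atTop {μ : ℝ} (ν : ℝ) (hμ : 0 < μ) :
    Tendsto (fun m : ℕ => μ * m + ν) atTop atTop :=
  (tendsto_natCast_atTop_atTop.const_mul_atTop hμ).atTop_add tendsto_const_nhds

theorem differentiable_tsum_mul_pow_of_tendsto {𝕜 : Type*} [NontriviallyNormedField 𝕜]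
    [CompleteSpace 𝕜] {c : ℕ → 𝕜} (hc : ∀ᶠ n in atTop, c n ≠ 0)
    (hc' : Tendsto (fun n => ‖c (n + 1)‖ / ‖c n‖) atTop (𝓝 0)) :
    Differentiable 𝕜 fun z => ∑' n, c n * z ^ n := by
  have hr := FormalMultilinearSeries.ofScalars_radius_eq_top_of_tendsto 𝕜 c hc hc'
  have hf := ((FormalMultilinearSeries.ofScalars 𝕜 c).hasFPowerSeriesOnBall
    (by simp [hr])).differentiableOn
  rw [hr, Metric.eball_top, differentiableOn_univ] at hf
  have hsum := FormalMultilinearSeries.ofScalarsSum_eq_tsum (E := 𝕜) c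
  simp only [smul_eq_mul] at hsum
  exact hsum ▸ hf

namespace Prabhakar

noncomputable def coeff (μ ν γ : ℝ) (m : ℕ) : ℝ :=
  (Real.Gamma (γ + m) / Real.Gamma γ) / (m ! * Real.Gamma (μ * m + ν))

variable {μ ν γ : ℝ}

theorem prabhakar_eq_tsum (z : ℂ) : prabhakar μ ν γ z = ∑' m, (coeff μ ν γ m : ℂ) * z ^ m := rfl

theorem coeff_pos (hγ : 0 < γ) {m : ℕ} (hm : 0 < μ * m + ν) : 0 < coeff μ ν γ m := by
  have := Real.Gamma_pos_of_pos hγ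
  have := Real.Gamma_pos_of_pos hm
  have := Real.Gamma_pos_of_pos (by positivity : 0 < γ + m)
  unfold coeff
  positivity

theorem coeff_succ (hμ : 0 < μ) (hγ : 0 < γ) {m : ℕ} (hm : 0 < μ * m + ν) :
    coeff μ ν γ (m + 1) = coeff μ ν γ m *
      ((γ + m) / (m + 1) * (Real.Gamma (μ * m + ν) / Real.Gamma (μ * m + ν + μ))) := by
  have hγm : 0 < γ + m := by positivity
  simp only [coeff, Nat.factorial_succ, Nat.cast_mul, Nat.cast_succ]
  rw [← add_assoc, Real.Gamma_add_one hγm.ne', show μ * (m + 1) + ν = μ * m + ν + μ by ring]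
  generalize μ * m + ν = t at *
  have := Real.Gamma_pos_of_pos hγ
  have := Real.Gamma_pos_of_pos hm
  have := Real.Gamma_pos_of_pos (add_pos hm hμ)
  field_simp

theorem tendsto_coeff_succ_div_coeff (hμ : 0 < μ) (hγ : 0 < γ) :
    Tendsto (fun m => ‖(coeff μ ν γ (m + 1) : ℂ)‖ / ‖(coeff μ ν γ m : ℂ)‖) atTop (𝓝 0) := by
  have hlin : Tendsto (fun m : ℕ => (γ + m) / (m + 1)) atTop (𝓝 1) := by
    simpa [add_comm (1 : ℝ)] using tendsto_add_mul_div_add_mul_atTop_nhds γ 1 (1 : ℝ) one_ne_zero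
  have hΓ : Tendsto (fun m : ℕ => Real.Gamma (μ * m + ν) / Real.Gamma (μ * m + ν + μ))
      atTop (𝓝 0) :=
    (Real.tendsto_Gamma_div_Gamma_add_atTop hμ).comp (tendsto_mul_natCast_add_atTop ν hμ)
  rw [← mul_zero 1]
  refine (hlin.mul hΓ).congr' ?_
  filter_upwards [(tendsto_mul_natCast_add_atTop ν hμ).eventually_gt_atTop 0] with m hm
  have hc := coeff_pos hγ hm
  have hm' : 0 < μ * ((m + 1 : ℕ) : ℝ) + ν := by push_cast; linarith
  have hc' := coeff_pos hγ hm'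
  rw [Complex.norm_real, Complex.norm_real, Real.norm_of_nonneg hc'.le,
    Real.norm_of_nonneg hc.le, coeff_succ hμ hγ hm, mul_div_cancel_left₀ _ hc.ne']

theorem differentiable_prabhakar (hμ : 0 < μ) (hγ : 0 < γ) :
    Differentiable ℂ (prabhakar μ ν γ) := by
  have hne : ∀ᶠ m in atTop, (coeff μ ν γ m : ℂ) ≠ 0 := by
    filter_upwards [(tendsto_mul_natCast_add_atTop ν hμ).eventually_gt_atTop 0] with m hm
    exact_mod_cast (coeff_pos hγ hm).ne'
  simpa only [← prabhakar_eq_tsum] using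
    differentiable_tsum_mul_pow_of_tendsto hne (tendsto_coeff_succ_div_coeff hμ hγ)

end Prabhakar

theorem prabhakar_mgf_general (μ ν γ : ℝ) (hμ0 : 0 < μ) (hγ : 0 < γ) (x : ℝ) (s : ℝ) :
    ∑' n : ℕ, ((Real.exp (-(s * n)) * (Real.Gamma ν * (x ^ n / n.factorial)) : ℝ) : ℂ)
        * iteratedDeriv n (prabhakar μ ν γ) (-(x : ℂ))
      = (Real.Gamma ν : ℂ) * prabhakar μ ν γ ((x * (Real.exp (-s) - 1) : ℝ) : ℂ) := by
  rw [← Complex.taylorSeries_eq_of_entire' (-(x : ℂ)) _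
    (Prabhakar.differentiable_prabhakar hμ0 hγ), ← tsum_mul_left]
  refine tsum_congr fun n => ?_
  rw [show -(s * n) = n * -s by ring, Real.exp_nat_mul]
  push_cast
  ring

/-- Moment generating function:
`∑_n e^{−sn} Γ(ν) (x^n/n!) (d^n/dz^n E_{μ,ν}^γ)(−x) = Γ(ν) E_{μ,ν}^γ(x(e^{−s}−1))`. -/
theorem prabhakar_mgf (μ ν γ : ℝ) (hμ0 : 0 < μ) (hμ1 : μ ≤ 1) (hγ : 0 < γ)
    (hν : μ * γ ≤ ν) (x : ℝ) (hx : 0 ≤ x) (s : ℝ) :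
    ∑' n : ℕ, ((Real.exp (-(s * n)) * (Real.Gamma ν * (x ^ n / n.factorial)) : ℝ) : ℂ)
        * iteratedDeriv n (prabhakar μ ν γ) (-(x : ℂ))
      = (Real.Gamma ν : ℂ) * prabhakar μ ν γ ((x * (Real.exp (-s) - 1) : ℝ) : ℂ) :=
  prabhakar_mgf_general μ ν γ hμ0 hγ x s
end

section
/- For all real parameters μ, ν, γ with 0 < μ ≤ 1, γ > 0, ν ≥ μγ, every real x ≥ 0, and every function g : ℝ → ℝ that is differentiable at 0 with g(0) = 1, the moment generating function of the fractional generalized compound process J(s) = Γ(ν) · E_{μ,ν}^γ(x(g(s) − 1)) is differentiable at s = 0 with derivative J′(0) = g′(0) · γ · Γ(ν) · x / Γ(μ + ν); that is, the mean of the compound process equals the mean of the summands times the mean count γΓ(ν)x/Γ(μ+ν). -/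
/-!
The coefficients of `E_{μ,ν}^γ` are those of the binomial series `(1 - z)^{-γ}`, `(γ)_m / m!`,
divided by `Γ(μ m + ν)`. For `μ > 0` the divisor is eventually `≥ 1`, so the
ratio test for the binomial coefficients gives a positive radius of convergence. Hence `E_{μ,ν}^γ`
is analytic at `0` with derivative its first coefficient `γ / Γ(μ + ν)`, and the chain rule
through `s ↦ x (g(s) - 1)`, which vanishes at `0`, gives the mean.
-/

open Filter Topology FormalMultilinearSeries

lemma FormalMultilinearSeries.radius_le_radius_of_eventually_norm_le
    {𝕜 E F 𝕜' E' F' : Type*} [NontriviallyNormedField 𝕜] [NormedAddCommGroup E]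
    [NormedSpace 𝕜 E] [NormedAddCommGroup F] [NormedSpace 𝕜 F]
    [NontriviallyNormedField 𝕜'] [NormedAddCommGroup E'] [NormedSpace 𝕜' E']
    [NormedAddCommGroup F'] [NormedSpace 𝕜' F']
    {p : FormalMultilinearSeries 𝕜 E F} {q : FormalMultilinearSeries 𝕜' E' F'}
    (h : ∀ᶠ n in atTop, ‖p n‖ ≤ ‖q n‖) : q.radius ≤ p.radius := by
  refine ENNReal.le_of_forall_nnreal_lt fun r hr => ?_
  obtain ⟨C, -, hC⟩ := q.norm_mul_pow_le_of_lt_radius hr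
  exact p.le_radius_of_eventually_le C <| h.mono fun n hn => by
    grw [hn]
    exact hC n

lemma Real.one_le_Gamma {x : ℝ} (hx : 2 ≤ x) : 1 ≤ Real.Gamma x :=
  Real.Gamma_two ▸ Real.Gamma_strictMonoOn_Ici.monotoneOn (le_refl (2 : ℝ)) hx hx

noncomputable def pochhammerDivFactorial (γ : ℝ) (m : ℕ) : ℝ :=
  Real.Gamma (γ + m) / Real.Gamma γ / m.factorial

lemma pochhammerDivFactorial_pos {γ : ℝ} (hγ : 0 < γ) (m : ℕ) :
    0 < pochhammerDivFactorial γ m := by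
  unfold pochhammerDivFactorial
  have := Real.Gamma_pos_of_pos hγ
  have := Real.Gamma_pos_of_pos (by positivity : 0 < γ + m)
  positivity

lemma pochhammerDivFactorial_succ {γ : ℝ} (hγ : 0 < γ) (m : ℕ) :
    pochhammerDivFactorial γ (m + 1) = pochhammerDivFactorial γ m * ((γ + m) / (m + 1)) := by
  have hΓ : Real.Gamma (γ + ↑(m + 1)) = (γ + m) * Real.Gamma (γ + m) := by
    rw [Nat.cast_succ, ← add_assoc, Real.Gamma_add_one (by positivity)]
  unfold pochhammerDivFactorial
  rw [hΓ, Nat.factorial_succ, Nat.cast_mul, Nat.cast_succ]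
  field_simp

lemma tendsto_pochhammerDivFactorial_succ_div {γ : ℝ} (hγ : 0 < γ) :
    Tendsto (fun m => ‖(pochhammerDivFactorial γ (m + 1) : ℂ)‖ /
      ‖(pochhammerDivFactorial γ m : ℂ)‖) atTop (𝓝 1) := by
  have hratio : ∀ m : ℕ, ‖(pochhammerDivFactorial γ (m + 1) : ℂ)‖ /
      ‖(pochhammerDivFactorial γ m : ℂ)‖ = 1 + (γ - 1) * (1 / ((m : ℝ) + 1)) := by
    intro m
    have hpos := pochhammerDivFactorial_pos hγ m
    rw [Complex.norm_real, Complex.norm_real, Real.norm_of_nonneg hpos.le,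
      Real.norm_of_nonneg (pochhammerDivFactorial_pos hγ (m + 1)).le,
      pochhammerDivFactorial_succ hγ]
    field_simp
    ring
  simp only [hratio]
  simpa using (tendsto_one_div_add_atTop_nhds_zero_nat (𝕜 := ℝ)).const_mul (γ - 1) |>.const_add 1

lemma one_le_radius_ofScalars_pochhammerDivFactorial {γ : ℝ} (hγ : 0 < γ) :
    1 ≤ (ofScalars ℂ fun m => (pochhammerDivFactorial γ m : ℂ)).radius := by
  simpa using inv_le_ofScalars_radius_of_tendsto ℂ _ one_ne_zero
    (by simpa using tendsto_pochhammerDivFactorial_succ_div hγ)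

noncomputable def prabhakarCoeff (μ ν γ : ℝ) (m : ℕ) : ℂ :=
  (((Real.Gamma (γ + m) / Real.Gamma γ) / (m.factorial * Real.Gamma (μ * m + ν)) : ℝ) : ℂ)

lemma prabhakar_eq_ofScalarsSum (μ ν γ : ℝ) :
    prabhakar μ ν γ = ofScalarsSum (prabhakarCoeff μ ν γ) := by
  rw [ofScalarsSum_eq_tsum]
  rfl

lemma prabhakarCoeff_eq_div (μ ν γ : ℝ) (m : ℕ) :
    prabhakarCoeff μ ν γ m = pochhammerDivFactorial γ m / Real.Gamma (μ * m + ν) := by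
  rw [prabhakarCoeff, pochhammerDivFactorial]
  push_cast
  ring

lemma prabhakarCoeff_one (μ ν : ℝ) {γ : ℝ} (hγ : γ ≠ 0) (hΓ : Real.Gamma γ ≠ 0) :
    prabhakarCoeff μ ν γ 1 = γ / Real.Gamma (μ + ν) := by
  simp [prabhakarCoeff, Real.Gamma_add_one hγ, hΓ]

lemma norm_prabhakarCoeff_le {μ : ℝ} (hμ : 0 < μ) (ν γ : ℝ) :
    ∀ᶠ m in atTop, ‖prabhakarCoeff μ ν γ m‖ ≤ ‖(pochhammerDivFactorial γ m : ℂ)‖ := by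
  have hlarge : Tendsto (fun m : ℕ => μ * m + ν) atTop atTop :=
    tendsto_atTop_add_const_right _ ν (tendsto_natCast_atTop_atTop.const_mul_atTop hμ)
  filter_upwards [hlarge.eventually_ge_atTop 2] with m hm
  have hΓ := Real.one_le_Gamma hm
  rw [prabhakarCoeff_eq_div, norm_div, Complex.norm_real (Real.Gamma _),
    Real.norm_of_nonneg (by linarith : 0 ≤ Real.Gamma (μ * m + ν))]
  exact div_le_self (norm_nonneg _) hΓ

lemma radius_ofScalars_prabhakarCoeff_pos {μ : ℝ} (hμ : 0 < μ) (ν : ℝ) {γ : ℝ} (hγ : 0 < γ) :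
    0 < (ofScalars ℂ (prabhakarCoeff μ ν γ)).radius :=
  zero_lt_one.trans_le <| (one_le_radius_ofScalars_pochhammerDivFactorial hγ).trans <|
    radius_le_radius_of_eventually_norm_le <| (norm_prabhakarCoeff_le hμ ν γ).mono fun m hm => by
      simpa only [ofScalars_norm] using hm

lemma hasDerivAt_prabhakar_zero {μ : ℝ} (hμ : 0 < μ) (ν : ℝ) {γ : ℝ} (hγ : 0 < γ) :
    HasDerivAt (prabhakar μ ν γ) ((γ / Real.Gamma (μ + ν) : ℝ) : ℂ) 0 := by
  have hseries := ((ofScalars ℂ (prabhakarCoeff μ ν γ)).hasFPowerSeriesOnBall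
    (radius_ofScalars_prabhakarCoeff_pos hμ ν hγ)).hasFPowerSeriesAt
  rw [← ofScalarsSum, ← prabhakar_eq_ofScalarsSum] at hseries
  have hderiv := hseries.hasDerivAt
  rw [ofScalars_apply_eq, pow_one, smul_eq_mul, mul_one,
    prabhakarCoeff_one μ ν hγ.ne' (Real.Gamma_pos_of_pos hγ).ne'] at hderiv
  exact_mod_cast hderiv

theorem compound_process_mean_general (μ ν γ : ℝ) (hμ0 : 0 < μ) (hγ : 0 < γ)
    (x : ℝ)
    (g : ℝ → ℝ) (hg : DifferentiableAt ℝ g 0) (hg0 : g 0 = 1) :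
    HasDerivAt (fun s : ℝ => (Real.Gamma ν : ℂ) * prabhakar μ ν γ ((x * (g s - 1) : ℝ) : ℂ))
      ((deriv g 0 * (γ * Real.Gamma ν * x / Real.Gamma (μ + ν)) : ℝ) : ℂ) 0 := by
  have hinner : HasDerivAt (fun s : ℝ => ((x * (g s - 1) : ℝ) : ℂ)) ((x * deriv g 0 : ℝ) : ℂ) 0 :=
    ((hg.hasDerivAt.sub_const 1).const_mul x).ofReal_comp
  have hcomp := (HasDerivAt.scomp_of_eq 0 (hasDerivAt_prabhakar_zero hμ0 ν hγ) hinner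
    (by simp [hg0])).const_mul (Real.Gamma ν : ℂ)
  refine hcomp.congr_deriv ?_
  rw [smul_eq_mul]
  push_cast
  ring

/-- Mean of the fractional generalized compound process: the moment generating function
`J(s) = Γ(ν) E_{μ,ν}^γ(x(g(s)−1))` (with `g` the mgf of the summands, `g(0)=1`) is
differentiable at `0` with `J′(0) = g′(0) · γΓ(ν)x/Γ(μ+ν)`. -/
theorem compound_process_mean (μ ν γ : ℝ) (hμ0 : 0 < μ) (hμ1 : μ ≤ 1) (hγ : 0 < γ)
    (hν : μ * γ ≤ ν) (x : ℝ) (hx : 0 ≤ x)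
    (g : ℝ → ℝ) (hg : DifferentiableAt ℝ g 0) (hg0 : g 0 = 1) :
    HasDerivAt (fun s : ℝ => (Real.Gamma ν : ℂ) * prabhakar μ ν γ ((x * (g s - 1) : ℝ) : ℂ))
      ((deriv g 0 * (γ * Real.Gamma ν * x / Real.Gamma (μ + ν)) : ℝ) : ℂ) 0 :=
  compound_process_mean_general μ ν γ hμ0 hγ x g hg hg0
end
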